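/- arXiv:1704.02238 — 2 statements merged into one kernel-verified Lean document; each statement's English description precedes it below -/
import Mathlib

section
/- There exists a constant c > 0 such that for every natural number N ≥ 2, the number of integer triples (x, y, z) with |x| ≤ N, |y| ≤ N, |z| ≤ N satisfying 9x² + 36y² − 4z² = 0 is at most c·N·log N. -/
/-!
Reducing modulo 2 and 3, every solution is `(2u, y, 3w)` with `u² + y² = w²`. Up to signs, such a
Pythagorean triple in `[0, N]³` is determined by the pair `(w - y, w + y)` in `[0, 2N]²`, whose
product `u²` is a square. A pair `(a, b)` with square product is `(g s², g t²)` for `g = gcd a b`,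
so there are at most `∑_{g ≤ M} (√(M/g) + 1)² = O(M log M)` such pairs in `[0, M]²`.
-/

open Finset

theorem exists_eq_two_mul_and_eq_three_mul_of_cone {x y z : ℤ}
    (h : 9 * x ^ 2 + 36 * y ^ 2 - 4 * z ^ 2 = 0) :
    ∃ u w : ℤ, x = 2 * u ∧ z = 3 * w ∧ u ^ 2 + y ^ 2 = w ^ 2 := by
  have hx : (2 : ℤ) ∣ x := by
    have : (2 : ℤ) ∣ 9 * x ^ 2 := ⟨2 * z ^ 2 - 18 * y ^ 2, by linear_combination h⟩
    exact Int.prime_two.dvd_of_dvd_pow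
      ((Int.prime_two.dvd_or_dvd this).resolve_left (by norm_num))
  obtain ⟨u, rfl⟩ := hx
  have hz : (3 : ℤ) ∣ z := by
    have : (3 : ℤ) ∣ 4 * z ^ 2 := ⟨12 * u ^ 2 + 12 * y ^ 2, by linear_combination -h⟩
    exact Int.prime_three.dvd_of_dvd_pow
      ((Int.prime_three.dvd_or_dvd this).resolve_left (by norm_num))
  obtain ⟨w, rfl⟩ := hz
  exact ⟨u, w, rfl, rfl, by linarith⟩

theorem card_le_eight_mul_card_image_natAbs (s : Finset (ℤ × ℤ × ℤ)) :
    #s ≤ 8 * #(s.image fun p => (p.1.natAbs, p.2.1.natAbs, p.2.2.natAbs)) := by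
  refine card_le_mul_card_image s 8 fun b _ => ?_
  calc _ ≤ #(({(b.1 : ℤ), -(b.1 : ℤ)} : Finset ℤ) ×ˢ ({(b.2.1 : ℤ), -(b.2.1 : ℤ)} : Finset ℤ)
          ×ˢ ({(b.2.2 : ℤ), -(b.2.2 : ℤ)} : Finset ℤ)) := by
        refine card_le_card fun p hp => ?_
        obtain ⟨-, rfl⟩ := mem_filter.mp hp
        simp only [mem_product, mem_insert, mem_singleton]
        exact ⟨Int.natAbs_eq _, Int.natAbs_eq _, Int.natAbs_eq _⟩
    _ ≤ 2 * (2 * 2) := by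
        rw [card_product, card_product]
        gcongr <;> exact card_le_two

theorem Nat.exists_eq_gcd_mul_sq_of_isSquare_mul {a b : ℕ} (h : IsSquare (a * b)) :
    ∃ s, a = Nat.gcd a b * s ^ 2 := by
  rcases Nat.eq_zero_or_pos (Nat.gcd a b) with hab | hab
  · exact ⟨0, by simp [(Nat.gcd_eq_zero_iff.mp hab).1]⟩
  obtain ⟨g, a', b', hg, hcop, rfl, rfl⟩ := Nat.exists_coprime' hab
  obtain ⟨c, hc⟩ := h
  obtain ⟨m, rfl⟩ : g ∣ c := (Nat.pow_dvd_pow_iff two_ne_zero).mp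
    ⟨a' * b', by linear_combination (exp := 1) -hc⟩
  have hm : a' * b' = m ^ 2 :=
    Nat.eq_of_mul_eq_mul_left (pow_pos hg 2) (by linear_combination hc)
  obtain ⟨d, rfl⟩ := exists_eq_pow_of_mul_eq_pow (Nat.isUnit_iff.mpr hcop) hm
  exact ⟨d, by rw [Nat.gcd_mul_right, hcop, one_mul, mul_comm]⟩

noncomputable def intCube (N : ℕ) : Finset (ℤ × ℤ × ℤ) :=
  Icc (-(N : ℤ)) N ×ˢ Icc (-(N : ℤ)) N ×ˢ Icc (-(N : ℤ)) N

noncomputable def pythagoreanTriplesInCube (N : ℕ) : Finset (ℤ × ℤ × ℤ) :=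
  (intCube N).filter fun p => p.1 ^ 2 + p.2.1 ^ 2 = p.2.2 ^ 2

def natPythagoreanTriplesUpTo (N : ℕ) : Finset (ℕ × ℕ × ℕ) :=
  (range (N + 1) ×ˢ range (N + 1) ×ˢ range (N + 1)).filter
    fun p => p.1 ^ 2 + p.2.1 ^ 2 = p.2.2 ^ 2

def squareProductPairsUpTo (M : ℕ) : Finset (ℕ × ℕ) :=
  (range (M + 1) ×ˢ range (M + 1)).filter fun p => IsSquare (p.1 * p.2)

theorem card_filter_cone_le (N : ℕ) :
    #((intCube N).filter fun p => 9 * p.1 ^ 2 + 36 * p.2.1 ^ 2 - 4 * p.2.2 ^ 2 = 0) ≤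
      #(pythagoreanTriplesInCube N) := by
  refine (card_le_card fun p hp => ?_).trans
    (card_image_le (f := fun q : ℤ × ℤ × ℤ => (2 * q.1, q.2.1, 3 * q.2.2)))
  obtain ⟨x, y, z⟩ := p
  simp only [intCube, pythagoreanTriplesInCube, mem_filter, mem_product, mem_Icc, mem_image,
    Prod.exists, Prod.mk.injEq] at hp ⊢
  obtain ⟨⟨hx, hy, hz⟩, hcone⟩ := hp
  obtain ⟨u, w, rfl, rfl, hpyth⟩ := exists_eq_two_mul_and_eq_three_mul_of_cone hcone
  exact ⟨u, y, w, ⟨⟨⟨by omega, by omega⟩, hy, by omega, by omega⟩, hpyth⟩, rfl, rfl, rfl⟩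

theorem card_pythagoreanTriplesInCube_le (N : ℕ) :
    #(pythagoreanTriplesInCube N) ≤ 8 * #(natPythagoreanTriplesUpTo N) := by
  refine (card_le_eight_mul_card_image_natAbs _).trans (Nat.mul_le_mul_left 8 (card_le_card ?_))
  intro q hq
  obtain ⟨p, hp, rfl⟩ := mem_image.mp hq
  simp only [intCube, pythagoreanTriplesInCube, natPythagoreanTriplesUpTo, mem_filter,
    mem_product, mem_Icc, mem_range] at hp ⊢
  obtain ⟨⟨hx, hy, hz⟩, hpyth⟩ := hp
  refine ⟨⟨by omega, by omega, by omega⟩, ?_⟩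
  have : (p.1.natAbs : ℤ) ^ 2 + (p.2.1.natAbs : ℤ) ^ 2 = (p.2.2.natAbs : ℤ) ^ 2 := by
    simpa only [Int.natAbs_sq] using hpyth
  exact_mod_cast this

theorem card_natPythagoreanTriplesUpTo_le (N : ℕ) :
    #(natPythagoreanTriplesUpTo N) ≤ #(squareProductPairsUpTo (2 * N)) := by
  have hle {p : ℕ × ℕ × ℕ} (hp : p ∈ natPythagoreanTriplesUpTo N) : p.2.1 ≤ p.2.2 := by
    simp only [natPythagoreanTriplesUpTo, mem_filter] at hp
    exact (Nat.pow_le_pow_iff_left two_ne_zero).mp (by omega)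
  refine card_le_card_of_injOn (fun p => (p.2.2 - p.2.1, p.2.2 + p.2.1)) (fun p hp => ?_)
    (fun p hp q hq hpq => ?_)
  · have hyw := hle hp
    simp only [natPythagoreanTriplesUpTo, squareProductPairsUpTo, coe_filter, mem_product,
      mem_range, Set.mem_ofPred_eq] at hp ⊢
    obtain ⟨⟨hx, hy, hz⟩, hpyth⟩ := hp
    refine ⟨⟨by omega, by omega⟩, p.1, ?_⟩
    rw [mul_comm, ← Nat.sq_sub_sq, ← sq]
    omega
  · have hyw := hle hp
    have hyw' := hle hq
    obtain ⟨x, y, w⟩ := p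
    obtain ⟨x', y', w'⟩ := q
    simp only [Prod.mk.injEq] at hpq hyw hyw'
    obtain ⟨rfl, rfl⟩ : y = y' ∧ w = w' := by omega
    simp only [natPythagoreanTriplesUpTo, coe_filter, Set.mem_ofPred_eq] at hp hq
    obtain rfl : x = x' := Nat.pow_left_injective two_ne_zero (by simp only; omega)
    rfl

theorem squareProductPairsUpTo_subset_image (M : ℕ) :
    squareProductPairsUpTo M ⊆
      ((range (M + 1)).sigma fun g => range (Nat.sqrt (M / g) + 1) ×ˢ
          range (Nat.sqrt (M / g) + 1)).image
        fun x => (x.1 * x.2.1 ^ 2, x.1 * x.2.2 ^ 2) := by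
  rintro ⟨a, b⟩ hab
  simp only [squareProductPairsUpTo, mem_filter, mem_product, mem_range] at hab
  obtain ⟨⟨ha, hb⟩, hsq⟩ := hab
  rcases Nat.eq_zero_or_pos (Nat.gcd a b) with hg | hg
  · obtain ⟨rfl, rfl⟩ := Nat.gcd_eq_zero_iff.mp hg
    exact mem_image.mpr ⟨⟨0, 0, 0⟩, by simp⟩
  obtain ⟨s, hs⟩ := Nat.exists_eq_gcd_mul_sq_of_isSquare_mul hsq
  obtain ⟨t, ht⟩ := Nat.exists_eq_gcd_mul_sq_of_isSquare_mul (mul_comm a b ▸ hsq)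
  rw [Nat.gcd_comm] at ht
  have hsqrt {r : ℕ} (hr : Nat.gcd a b * r ^ 2 < M + 1) : r < Nat.sqrt (M / Nat.gcd a b) + 1 :=
    Nat.lt_succ_of_le (Nat.le_sqrt'.mpr ((Nat.le_div_iff_mul_le hg).mpr (by linarith)))
  refine mem_image.mpr ⟨⟨Nat.gcd a b, s, t⟩, ?_, by simp [← hs, ← ht]⟩
  simp only [mem_sigma, mem_product, mem_range]
  refine ⟨?_, hsqrt (hs ▸ ha), hsqrt (ht ▸ hb)⟩
  rcases Nat.eq_zero_or_pos a with rfl | ha0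
  · simpa using hb
  · exact (Nat.gcd_le_left b ha0).trans_lt ha

theorem card_squareProductPairsUpTo_le (M : ℕ) :
    #(squareProductPairsUpTo M) ≤ 2 * ∑ g ∈ range (M + 1), M / g + 2 * (M + 1) := by
  calc #(squareProductPairsUpTo M)
      ≤ ∑ g ∈ range (M + 1), (Nat.sqrt (M / g) + 1) ^ 2 := by
        refine (card_le_card (squareProductPairsUpTo_subset_image M)).trans
          (card_image_le.trans_eq ?_)
        simp [card_sigma, card_product, sq]
    _ ≤ ∑ g ∈ range (M + 1), (2 * (M / g) + 2) := by
        refine sum_le_sum fun g _ => ?_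
        nlinarith [Nat.sqrt_le' (M / g)]
    _ = 2 * ∑ g ∈ range (M + 1), M / g + 2 * (M + 1) := by
        rw [sum_add_distrib, mul_sum, sum_const, card_range, smul_eq_mul, mul_comm]

theorem sum_range_succ_div_le_mul_one_add_log (M : ℕ) :
    ((∑ g ∈ range (M + 1), M / g : ℕ) : ℝ) ≤ M * (1 + Real.log M) := by
  rw [sum_range_succ', Nat.div_zero, add_zero, Nat.cast_sum]
  calc ∑ i ∈ range M, ((M / (i + 1) : ℕ) : ℝ)
      ≤ ∑ i ∈ range M, (M : ℝ) * (↑(i + 1))⁻¹ :=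
        sum_le_sum fun i _ => Nat.cast_div_le.trans_eq (div_eq_mul_inv _ _)
    _ = M * harmonic M := by simp [harmonic, mul_sum]
    _ ≤ M * (1 + Real.log M) := by gcongr; exact harmonic_le_one_add_log M

theorem diagonal_cone_solution_count_bound :
    ∃ c : ℝ, 0 < c ∧ ∀ N : ℕ, 2 ≤ N →
      (((Finset.Icc (-(N : ℤ)) N ×ˢ Finset.Icc (-(N : ℤ)) N ×ˢ
            Finset.Icc (-(N : ℤ)) N).filter
          (fun p : ℤ × ℤ × ℤ =>
            9 * p.1 ^ 2 + 36 * p.2.1 ^ 2 - 4 * p.2.2 ^ 2 = 0)).card : ℝ)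
        ≤ c * N * Real.log N := by
  refine ⟨224, by norm_num, fun N hN => ?_⟩
  have hcount := (card_filter_cone_le N).trans <| (card_pythagoreanTriplesInCube_le N).trans <|
    Nat.mul_le_mul_left 8 <| (card_natPythagoreanTriplesUpTo_le N).trans <|
      card_squareProductPairsUpTo_le (2 * N)
  have hdiv := sum_range_succ_div_le_mul_one_add_log (2 * N)
  have hN2 : (2 : ℝ) ≤ N := by exact_mod_cast hN
  have hlogN : Real.log 2 ≤ Real.log N := Real.log_le_log two_pos hN2
  have hlog2 : 1 / 2 < Real.log 2 := by linarith [Real.log_two_gt_d9]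
  have hlog2N : Real.log (2 * N) = Real.log 2 + Real.log N :=
    Real.log_mul two_ne_zero (by positivity)
  refine (Nat.cast_le.mpr hcount).trans ?_
  push_cast at hdiv ⊢
  rw [hlog2N] at hdiv
  nlinarith
end

section
/- There exists a constant c > 0 such that for every natural number N ≥ 2, the number of integer triples (x₁, x₂, x₃) with |x₁| ≤ N, |x₂| ≤ N, |x₃| ≤ N satisfying x₁² + 5x₂² + x₃² + 2x₁x₂ + 6x₁x₃ + 2x₂x₃ + 8x₁ + 20x₂ + 16 = 0 is at most c·N·log N. -/
/-!
The substitution `u = -(x₁ + x₂ + 1)`, `v = x₁ + x₂ + 6x₃ + 7`, `w = 2x₂ - x₃ + 3` is injective and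
turns the equation into `u v = w²`, with `|u|, |v|, |w| ≤ 8N + 7`. The points with `w = 0` lie on two
lines. A point with `w ≠ 0` is determined by `(|u|, |v|)` and two signs, and `|u| |v|` is a square,
so `|u| = g m²` and `|v| = g t²`; counting the triples `(g, m, t)` with `g m², g t² ≤ K` gives at
most `∑_{g ≤ K} K / g ≤ K (1 + log K)` such pairs.
-/

open Finset

theorem Nat.exists_mul_sq_mul_sq_of_isSquare_mul {d e : ℕ} (h : IsSquare (d * e)) :
    ∃ g m t : ℕ, d = g * m ^ 2 ∧ e = g * t ^ 2 := by
  obtain ⟨d', e', hcop, hd, he⟩ := Nat.exists_coprime d e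
  set g := d.gcd e
  rcases Nat.eq_zero_or_pos g with hg | hg
  · exact ⟨0, 0, 0, by simp [hd, hg], by simp [he, hg]⟩
  obtain ⟨s, hs⟩ := h
  obtain ⟨s', rfl⟩ : g ∣ s := by
    rw [← Nat.pow_dvd_pow_iff two_ne_zero, sq s, ← hs, hd, he]
    exact ⟨d' * e', by ring⟩
  have hprod : d' * e' = s' ^ 2 :=
    Nat.eq_of_mul_eq_mul_left (pow_pos hg 2) (by rw [hd, he] at hs; linear_combination hs)
  obtain ⟨m, hm⟩ := exists_eq_pow_of_mul_eq_pow (Nat.isUnit_iff.mpr hcop) hprod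
  obtain ⟨t, ht⟩ :=
    exists_eq_pow_of_mul_eq_pow (Nat.isUnit_iff.mpr hcop.symm) ((mul_comm _ _).trans hprod)
  exact ⟨g, m, t, by rw [hd, hm, mul_comm], by rw [he, ht, mul_comm]⟩

theorem card_filter_isSquare_mul_le (M : ℕ) :
    (#{p ∈ Icc 1 M ×ˢ Icc 1 M | IsSquare (p.1 * p.2)} : ℝ) ≤ M * (1 + Real.log M) := by
  set G := (Icc 1 M).sigma fun g => Icc 1 (Nat.sqrt (M / g)) ×ˢ Icc 1 (Nat.sqrt (M / g))
  have mem_G {g m : ℕ} (h₁ : 1 ≤ g * m ^ 2) (h₂ : g * m ^ 2 ≤ M) :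
      g ∈ Icc 1 M ∧ m ∈ Icc 1 (Nat.sqrt (M / g)) := by
    have hg : 0 < g := Nat.pos_of_mul_pos_right h₁
    have hm : 0 < m := pos_of_ne_zero (by rintro rfl; simp at h₁)
    refine ⟨mem_Icc.2 ⟨hg, ?_⟩, mem_Icc.2 ⟨hm, ?_⟩⟩
    · exact (Nat.le_mul_of_pos_right g (pow_pos hm 2)).trans h₂
    · rw [Nat.le_sqrt', Nat.le_div_iff_mul_le hg, mul_comm]
      exact h₂
  have hsub : {p ∈ Icc 1 M ×ˢ Icc 1 M | IsSquare (p.1 * p.2)} ⊆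
      G.image fun x => (x.1 * x.2.1 ^ 2, x.1 * x.2.2 ^ 2) := by
    rintro ⟨d, e⟩ hp
    simp only [mem_filter, mem_product, mem_Icc] at hp
    obtain ⟨⟨⟨hd₁, hd₂⟩, he₁, he₂⟩, hsq⟩ := hp
    obtain ⟨g, m, t, rfl, rfl⟩ := Nat.exists_mul_sq_mul_sq_of_isSquare_mul hsq
    obtain ⟨hg, hm⟩ := mem_G hd₁ hd₂
    obtain ⟨-, ht⟩ := mem_G he₁ he₂
    exact mem_image.2 ⟨⟨g, m, t⟩, mem_sigma.2 ⟨hg, mem_product.2 ⟨hm, ht⟩⟩, rfl⟩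
  have hG : (#G : ℝ) ≤ M * harmonic M := by
    rw [card_sigma, harmonic_eq_sum_Icc]
    push_cast
    rw [mul_sum]
    refine sum_le_sum fun g _ => ?_
    calc ((#(Icc 1 (Nat.sqrt (M / g)) ×ˢ Icc 1 (Nat.sqrt (M / g))) : ℕ) : ℝ)
        = (Nat.sqrt (M / g) ^ 2 : ℕ) := by simp [sq]
      _ ≤ (M / g : ℕ) := by exact_mod_cast Nat.sqrt_le' _
      _ ≤ M * (g : ℝ)⁻¹ := Nat.cast_div_le
  calc (#{p ∈ Icc 1 M ×ˢ Icc 1 M | IsSquare (p.1 * p.2)} : ℝ)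
      ≤ #(G.image fun x => (x.1 * x.2.1 ^ 2, x.1 * x.2.2 ^ 2)) := by
        exact_mod_cast card_le_card hsub
    _ ≤ #G := by exact_mod_cast card_image_le
    _ ≤ M * harmonic M := hG
    _ ≤ M * (1 + Real.log M) := by gcongr; exact harmonic_le_one_add_log M

noncomputable def mulEqSqBox (K : ℕ) : Finset (ℤ × ℤ × ℤ) :=
  {q ∈ Icc (-(K : ℤ)) K ×ˢ Icc (-(K : ℤ)) K ×ˢ Icc (-(K : ℤ)) K | q.1 * q.2.1 = q.2.2 ^ 2}

theorem mem_mulEqSqBox {K : ℕ} {u v w : ℤ} :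
    (u, v, w) ∈ mulEqSqBox K ↔
      (-(K : ℤ) ≤ u ∧ u ≤ K) ∧ (-(K : ℤ) ≤ v ∧ v ≤ K) ∧ (-(K : ℤ) ≤ w ∧ w ≤ K) ∧
        u * v = w ^ 2 := by
  simp only [mulEqSqBox, mem_filter, mem_product, mem_Icc, and_assoc]

theorem mulEqSqBox_mono : Monotone mulEqSqBox := by
  intro K L hKL ⟨u, v, w⟩
  have : (K : ℤ) ≤ L := by exact_mod_cast hKL
  simp only [mem_mulEqSqBox]
  omega

theorem card_filter_mulEqSqBox_eq_zero_le (K : ℕ) :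
    #{q ∈ mulEqSqBox K | q.2.2 = 0} ≤ 2 * (2 * K + 1) := by
  calc #{q ∈ mulEqSqBox K | q.2.2 = 0} ≤ #(Icc (-(K : ℤ)) K ×ˢ (univ : Finset Bool)) := by
        refine card_le_card_of_injOn (fun q => (q.1 + q.2.1, decide (q.1 = 0))) ?_ ?_
        · rintro ⟨u, v, w⟩ hq
          simp only [mem_coe, mem_filter, mem_mulEqSqBox] at hq
          obtain ⟨⟨hu, hv, -, huv⟩, rfl⟩ := hq
          have := mul_eq_zero.1 (huv.trans (zero_pow two_ne_zero))
          simp only [mem_coe, mem_product, mem_Icc, mem_univ, and_true]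
          omega
        · rintro ⟨u, v, w⟩ hq ⟨u', v', w'⟩ hq' h
          simp only [mem_coe, mem_filter, mem_mulEqSqBox] at hq hq'
          obtain ⟨⟨-, -, -, huv⟩, rfl⟩ := hq
          obtain ⟨⟨-, -, -, huv'⟩, rfl⟩ := hq'
          have := mul_eq_zero.1 (huv.trans (zero_pow two_ne_zero))
          have := mul_eq_zero.1 (huv'.trans (zero_pow two_ne_zero))
          simp only [Prod.mk.injEq, decide_eq_decide, and_true] at h ⊢
          omega
    _ = 2 * (2 * K + 1) := by simp; omega

theorem card_filter_mulEqSqBox_ne_zero_le (K : ℕ) :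
    #{q ∈ mulEqSqBox K | q.2.2 ≠ 0} ≤
      4 * #{p ∈ Icc 1 K ×ˢ Icc 1 K | IsSquare (p.1 * p.2)} := by
  have same_sign {u v w : ℤ} (huv : u * v = w ^ 2) (hw : w ≠ 0) :
      (0 < u ↔ 0 < v) ∧ u ≠ 0 ∧ v ≠ 0 := by
    have := mul_pos_iff.1 (huv ▸ by positivity : 0 < u * v)
    omega
  calc #{q ∈ mulEqSqBox K | q.2.2 ≠ 0} ≤
        #({p ∈ Icc 1 K ×ˢ Icc 1 K | IsSquare (p.1 * p.2)} ×ˢ (univ : Finset (Bool × Bool))) := by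
        refine card_le_card_of_injOn
          (fun q => ((q.1.natAbs, q.2.1.natAbs), (decide (0 < q.1), decide (0 < q.2.2)))) ?_ ?_
        · rintro ⟨u, v, w⟩ hq
          simp only [mem_coe, mem_filter, mem_mulEqSqBox] at hq
          obtain ⟨⟨hu, hv, -, huv⟩, hw⟩ := hq
          have := same_sign huv hw
          simp only [mem_coe, mem_product, mem_filter, mem_Icc, mem_univ, and_true]
          refine ⟨by omega, w.natAbs, ?_⟩
          rw [← Int.natAbs_mul, huv, sq, Int.natAbs_mul]
        · rintro ⟨u, v, w⟩ hq ⟨u', v', w'⟩ hq' h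
          simp only [mem_coe, mem_filter, mem_mulEqSqBox] at hq hq'
          obtain ⟨⟨-, -, -, huv⟩, hw⟩ := hq
          obtain ⟨⟨-, -, -, huv'⟩, hw'⟩ := hq'
          have := same_sign huv hw
          have := same_sign huv' hw'
          simp only [Prod.mk.injEq, decide_eq_decide] at h ⊢
          obtain ⟨⟨hu, hv⟩, hsu, hsw⟩ := h
          obtain rfl : u = u' := by omega
          obtain rfl : v = v' := by omega
          have := sq_eq_sq_iff_eq_or_eq_neg.1 (huv.symm.trans huv')
          omega
    _ = 4 * #{p ∈ Icc 1 K ×ˢ Icc 1 K | IsSquare (p.1 * p.2)} := by simp [mul_comm]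

theorem card_mulEqSqBox_le (K : ℕ) :
    (#(mulEqSqBox K) : ℝ) ≤ 2 * (2 * K + 1) + 4 * (K * (1 + Real.log K)) := by
  rw [← card_filter_add_card_filter_not (s := mulEqSqBox K) (fun q => q.2.2 = 0)]
  push_cast
  gcongr
  · exact_mod_cast card_filter_mulEqSqBox_eq_zero_le K
  · calc (#{q ∈ mulEqSqBox K | ¬q.2.2 = 0} : ℝ)
        ≤ 4 * #{p ∈ Icc 1 K ×ˢ Icc 1 K | IsSquare (p.1 * p.2)} := by
          exact_mod_cast card_filter_mulEqSqBox_ne_zero_le K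
      _ ≤ 4 * (K * (1 + Real.log K)) := by gcongr; exact card_filter_isSquare_mul_le K

theorem card_solutions_le_card_mulEqSqBox (N : ℕ) :
    #((Icc (-(N : ℤ)) N ×ˢ Icc (-(N : ℤ)) N ×ˢ Icc (-(N : ℤ)) N).filter
        fun p : ℤ × ℤ × ℤ =>
          p.1 ^ 2 + 5 * p.2.1 ^ 2 + p.2.2 ^ 2 + 2 * p.1 * p.2.1 +
            6 * p.1 * p.2.2 + 2 * p.2.1 * p.2.2 + 8 * p.1 + 20 * p.2.1 + 16 = 0)
      ≤ #(mulEqSqBox (8 * N + 7)) := by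
  refine card_le_card_of_injOn
    (fun p => (-p.1 - p.2.1 - 1, p.1 + p.2.1 + 6 * p.2.2 + 7, 2 * p.2.1 - p.2.2 + 3)) ?_ ?_
  · rintro ⟨x, y, z⟩ hp
    simp only [mem_coe, mem_filter, mem_product, mem_Icc] at hp
    obtain ⟨⟨hx, hy, hz⟩, heq⟩ := hp
    rw [mem_coe, mem_mulEqSqBox]
    push_cast
    exact ⟨by omega, by omega, by omega, by linear_combination -heq⟩
  · rintro ⟨x, y, z⟩ - ⟨x', y', z'⟩ - h
    simp only [Prod.mk.injEq] at h ⊢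
    omega

theorem nondiagonal_cone_solution_count_bound :
    ∃ c : ℝ, 0 < c ∧ ∀ N : ℕ, 2 ≤ N →
      (((Finset.Icc (-(N : ℤ)) N ×ˢ Finset.Icc (-(N : ℤ)) N ×ˢ
            Finset.Icc (-(N : ℤ)) N).filter
          (fun p : ℤ × ℤ × ℤ =>
            p.1 ^ 2 + 5 * p.2.1 ^ 2 + p.2.2 ^ 2 + 2 * p.1 * p.2.1 +
              6 * p.1 * p.2.2 + 2 * p.2.1 * p.2.2 + 8 * p.1 + 20 * p.2.1 + 16
            = 0)).card : ℝ)
        ≤ c * N * Real.log N := by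
  refine ⟨600, by norm_num, fun N hN => ?_⟩
  have hN' : (2 : ℝ) ≤ N := by exact_mod_cast hN
  have hlog : 1 ≤ 2 * Real.log N := by
    linarith [Real.log_le_log two_pos hN', Real.log_two_gt_d9]
  have hlog16 : Real.log (16 * N) ≤ 5 * Real.log N := by
    rw [Real.log_mul (by norm_num) (by positivity), show (16 : ℝ) = 2 ^ 4 by norm_num,
      Real.log_pow]
    push_cast
    linarith [Real.log_le_log two_pos hN']
  calc _ ≤ (#(mulEqSqBox (8 * N + 7)) : ℝ) := by
        exact_mod_cast card_solutions_le_card_mulEqSqBox N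
    _ ≤ #(mulEqSqBox (16 * N)) := by
        exact_mod_cast card_le_card (mulEqSqBox_mono (by omega))
    _ ≤ 2 * (2 * (16 * N) + 1) + 4 * (16 * N * (1 + Real.log (16 * N))) := by
        exact_mod_cast card_mulEqSqBox_le (16 * N)
    _ ≤ 600 * N * Real.log N := by nlinarith
end
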